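/- arXiv:1810.07151 — 7 statements merged into one kernel-verified Lean document; each statement's English description precedes it below -/
import Mathlib

section
/- Let p be a probability density on ℝ^d and let q(·|·) be a measurable Markov transition density on ℝ^d (so that for each x, q(·|x) is a probability density), with p(x)·q(x'|x) > 0 for all x, x'. Then the Metropolis–Hastings acceptance rate satisfies ∫∫ p(x) q(x'|x) min{1, p(x')q(x|x')/(p(x)q(x'|x))} dx dx' = 1 − (1/2)·∫∫ |p(x')q(x|x') − p(x)q(x'|x)| dx dx'; that is, the acceptance rate equals one minus the total variation distance between the joint densities p(x')q(x|x') and p(x)q(x'|x). -/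
open MeasureTheory

lemma integrable_of_integral_eq_one' {α : Type*} [MeasurableSpace α] {μ : Measure α}
    {f : α → ℝ} (h : ∫ x, f x ∂μ = 1) : Integrable f μ := by
  by_contra hf
  rw [integral_undef hf] at h
  norm_num at h

/-- Theorem 1 of the paper: the Metropolis–Hastings acceptance rate equals one minus the
total variation distance between the joint densities `p(x')q(x|x')` and `p(x)q(x'|x)`.
Here `q x' x` denotes the transition density `q(x'|x)`. -/
theorem mh_acceptance_rate_eq_one_sub_tv
    {d : ℕ} (p : (Fin d → ℝ) → ℝ) (q : (Fin d → ℝ) → (Fin d → ℝ) → ℝ)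
    (hp_meas : Measurable p) (hq_meas : Measurable (Function.uncurry q))
    (hp_nonneg : ∀ x, 0 ≤ p x) (hq_nonneg : ∀ x' x, 0 ≤ q x' x)
    (hp_int : ∫ x, p x = 1) (hq_int : ∀ x, ∫ x', q x' x = 1)
    (h_pos : ∀ x x', 0 < p x * q x' x) :
    ∫ x, ∫ x', p x * q x' x * min 1 (p x' * q x x' / (p x * q x' x)) =
      1 - (1 / 2) * ∫ x, ∫ x', |p x' * q x x' - p x * q x' x| := by
  set B : (Fin d → ℝ) × (Fin d → ℝ) → ℝ := fun z => p z.1 * q z.2 z.1 with hB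
  set A : (Fin d → ℝ) × (Fin d → ℝ) → ℝ := fun z => p z.2 * q z.1 z.2 with hA
  have hp_i : Integrable p := integrable_of_integral_eq_one' hp_int
  have hq_i : ∀ x, Integrable (fun x' => q x' x) := fun x =>
    integrable_of_integral_eq_one' (hq_int x)
  have hB_meas : Measurable B := (hp_meas.comp measurable_fst).mul
    (hq_meas.comp (measurable_snd.prodMk measurable_fst))
  have hB_int : Integrable B (volume.prod volume) := by
    rw [integrable_prod_iff hB_meas.aestronglyMeasurable]
    constructor
    · exact Filter.Eventually.of_forall fun x => (hq_i x).const_mul (p x)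
    · have he : (fun x => ∫ y, ‖B (x, y)‖) = p := by
        funext x
        simp only [hB, Real.norm_eq_abs]
        rw [show (fun y => |p x * q y x|) = fun y => p x * q y x from
          funext fun y => abs_of_nonneg (mul_nonneg (hp_nonneg _) (hq_nonneg _ _)),
          integral_const_mul, hq_int x, mul_one]
      rw [he]
      exact hp_i
  have hA_eq : A = B ∘ Prod.swap := rfl
  have hA_int : Integrable A (volume.prod volume) := by
    rw [hA_eq]; exact hB_int.swap
  have hB_integral : ∫ z, B z ∂(volume.prod volume) = 1 := by
    rw [integral_prod _ hB_int]
    calc ∫ x, ∫ y, p x * q y x = ∫ x, p x := by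
          congr 1; funext x; rw [integral_const_mul, hq_int x, mul_one]
      _ = 1 := hp_int
  have hA_integral : ∫ z, A z ∂(volume.prod volume) = 1 := by
    rw [hA_eq, show (B ∘ Prod.swap) = fun z : (Fin d → ℝ) × (Fin d → ℝ) => B z.swap from rfl,
      integral_prod_swap B, hB_integral]
  have hT_int : Integrable (fun z => |A z - B z|) (volume.prod volume) :=
    (hA_int.sub hB_int).abs
  have e1 : ∀ x x', p x * q x' x * min 1 (p x' * q x x' / (p x * q x' x)) =
      (B (x, x') + A (x, x') - |A (x, x') - B (x, x')|) / 2 := by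
    intro x x'
    have hpos := h_pos x x'
    have h1 : p x * q x' x * min 1 (p x' * q x x' / (p x * q x' x))
        = min (p x * q x' x) (p x' * q x x') := by
      rw [mul_min_of_nonneg _ _ hpos.le, mul_one, mul_comm (p x * q x' x),
        div_mul_cancel₀ _ hpos.ne']
    rw [h1]
    have hmin : ∀ a b : ℝ, min a b = (a + b - |b - a|) / 2 := by
      intro a b
      rcases le_total a b with h | h
      · rw [min_eq_left h, abs_of_nonneg (by linarith)]; ring
      · rw [min_eq_right h, abs_of_nonpos (by linarith)]; ring
    exact hmin _ _
  have hI : Integrable (fun z => (B z + A z - |A z - B z|) / 2) (volume.prod volume) :=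
    ((hB_int.add hA_int).sub hT_int).div_const 2
  rw [show (∫ x, ∫ x', p x * q x' x * min 1 (p x' * q x x' / (p x * q x' x)))
      = ∫ x, ∫ x', (B (x, x') + A (x, x') - |A (x, x') - B (x, x')|) / 2 from by
    simp only [e1]]
  rw [show (∫ x, ∫ x', |p x' * q x x' - p x * q x' x|)
      = ∫ x, ∫ x', |A (x, x') - B (x, x')| from rfl]
  rw [← integral_prod _ hI, ← integral_prod _ hT_int]
  have hf : Integrable (fun z => B z + A z) (volume.prod volume) := hB_int.add hA_int
  have h2 : ∫ z, (B z + A z - |A z - B z|) ∂(volume.prod volume)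
      = (∫ z, (B z + A z) ∂(volume.prod volume))
        - ∫ z, |A z - B z| ∂(volume.prod volume) := integral_sub hf hT_int
  rw [integral_div, h2, integral_add hB_int hA_int, hB_integral, hA_integral]
  ring
end

section
/- Let p be a probability density on ℝ^d and let q(·|·) be a measurable Markov transition density on ℝ^d with p(x)·q(x'|x) > 0 for all x, x'. Then the Metropolis–Hastings acceptance rate satisfies AR = ∫∫ p(x)q(x'|x) min{1, p(x')q(x|x')/(p(x)q(x'|x))} dx dx' ≥ 1 − sqrt( (1/2)·KL( p(x')q(x|x') ‖ p(x)q(x'|x) ) ), where the KL divergence between the two joint densities is KL(f‖g) = ∫∫ f·log(f/g). -/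
open MeasureTheory Real Set InformationTheory

/-!
Write `F(x, x') = p(x) q(x'|x)` and `G = F ∘ swap`. Both are probability densities on the product
space and the acceptance rate is `∫ min {F, G} = 1 - ½ ∫ |F - G|`, so the bound is Pinsker's
inequality `½ ∫ |F - G| ≤ √(KL(G‖F) / 2)`. That follows by Cauchy–Schwarz from the pointwise
inequality `3 (t - 1)² ≤ 2 (t + 2) (t log t - t + 1)`, whose right side minus left side is convex
with a critical point at `t = 1`: at `t = G / F` it reads `(F - G)² ≤ h w` with `∫ h = KL(G‖F)`
and `∫ w = 2`.
-/

lemma three_mul_sq_sub_one_le_mul_klFun {t : ℝ} (ht : 0 < t) :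
    3 * (t - 1) ^ 2 ≤ 2 * (t + 2) * klFun t := by
  set φ : ℝ → ℝ := fun t => 2 * (t + 2) * klFun t - 3 * (t - 1) ^ 2
  set φ' : ℝ → ℝ := fun t => 4 * ((t + 1) * log t - 2 * (t - 1))
  have hφ : ∀ t ≠ 0, HasDerivAt φ (φ' t) t := fun t ht =>
    ((((hasDerivAt_id' t).add_const 2).const_mul 2).mul (hasDerivAt_klFun ht)).sub
      ((((hasDerivAt_id' t).sub_const 1).pow 2).const_mul 3) |>.congr_deriv <| by
        simp only [φ', klFun_apply]; ring
  have hφ' : ∀ t ≠ 0, HasDerivAt φ' (4 * (log t + t⁻¹ - 1)) t := fun t ht =>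
    ((((hasDerivAt_id' t).add_const 1).mul (hasDerivAt_log ht)).sub
      (((hasDerivAt_id' t).sub_const 1).const_mul 2)).const_mul 4 |>.congr_deriv <| by
        field_simp; ring
  have hconv : ConvexOn ℝ (Ioi 0) φ := by
    refine convexOn_of_hasDerivWithinAt2_nonneg (f' := φ') (f'' := fun x => 4 * (log x + x⁻¹ - 1))
      (convex_Ioi 0) (fun x hx => (hφ x hx.ne').continuousAt.continuousWithinAt) ?_ ?_ ?_ <;>
      rw [interior_Ioi] <;> intro x hx
    · exact (hφ x hx.ne').hasDerivWithinAt
    · exact (hφ' x hx.ne').hasDerivWithinAt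
    · linarith [one_sub_inv_le_log_of_pos hx]
  have hmin : IsMinOn φ (Ioi 0) 1 := by
    refine hconv.isMinOn_of_rightDeriv_eq_zero (by simp) ?_
    rw [(hφ 1 one_ne_zero).hasDerivWithinAt.derivWithin (uniqueDiffWithinAt_Ioi 1)]
    simp [φ']
  have := hmin ht
  simp only [φ, klFun_one, mem_ofPred_eq] at this
  linarith

lemma three_mul_sq_sub_le_mul_log_div {a b : ℝ} (ha : 0 < a) (hb : 0 < b) :
    3 * (a - b) ^ 2 ≤ 2 * (a + 2 * b) * (a * log (a / b) + b - a) := by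
  calc 3 * (a - b) ^ 2 = b ^ 2 * (3 * (a / b - 1) ^ 2) := by field_simp
    _ ≤ b ^ 2 * (2 * (a / b + 2) * klFun (a / b)) :=
        mul_le_mul_of_nonneg_left (three_mul_sq_sub_one_le_mul_klFun (div_pos ha hb)) (sq_nonneg b)
    _ = 2 * (a + 2 * b) * (a * log (a / b) + b - a) := by rw [klFun_apply]; field_simp

lemma mul_min_one_div_of_pos {a : ℝ} (ha : 0 < a) (b : ℝ) : a * min 1 (b / a) = min a b := by
  rw [mul_min_of_nonneg _ _ ha.le, mul_one, mul_div_cancel₀ _ ha.ne']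

section Integrals

variable {α : Type*} [MeasurableSpace α] {μ : Measure α}

lemma memLp_two_sqrt {h : α → ℝ} (hh : Integrable h μ) (hh0 : 0 ≤ᵐ[μ] h) :
    MemLp (fun x => √(h x)) 2 μ := by
  refine (memLp_two_iff_integrable_sq (continuous_sqrt.comp_aestronglyMeasurable hh.1)).2 ?_
  refine hh.congr ?_
  filter_upwards [hh0] with x hx
  exact (sq_sqrt hx).symm

lemma integral_sqrt_mul_sqrt_le {h w : α → ℝ} (hh : Integrable h μ) (hw : Integrable w μ)
    (hh0 : 0 ≤ᵐ[μ] h) (hw0 : 0 ≤ᵐ[μ] w) :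
    ∫ x, √(h x) * √(w x) ∂μ ≤ √(∫ x, h x ∂μ) * √(∫ x, w x ∂μ) := by
  have holder := integral_mul_le_Lp_mul_Lq_of_nonneg Real.HolderConjugate.two_two
    (ae_of_all _ fun x => sqrt_nonneg (h x)) (ae_of_all _ fun x => sqrt_nonneg (w x))
    (by simpa using memLp_two_sqrt hh hh0) (by simpa using memLp_two_sqrt hw hw0)
  have sq_sqrt_ae {k : α → ℝ} (hk0 : 0 ≤ᵐ[μ] k) : ∫ x, √(k x) ^ (2 : ℝ) ∂μ = ∫ x, k x ∂μ := by
    refine integral_congr_ae ?_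
    filter_upwards [hk0] with x hx
    rw [rpow_two, sq_sqrt hx]
  rwa [sq_sqrt_ae hh0, sq_sqrt_ae hw0, ← sqrt_eq_rpow, ← sqrt_eq_rpow] at holder

lemma integral_abs_le_of_sq_le_mul {u h w : α → ℝ} (hh : Integrable h μ) (hw : Integrable w μ)
    (hh0 : 0 ≤ᵐ[μ] h) (hw0 : 0 ≤ᵐ[μ] w) (huhw : ∀ᵐ x ∂μ, u x ^ 2 ≤ h x * w x) :
    ∫ x, |u x| ∂μ ≤ √(∫ x, h x ∂μ) * √(∫ x, w x ∂μ) := by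
  refine le_trans ?_ (integral_sqrt_mul_sqrt_le hh hw hh0 hw0)
  refine integral_mono_of_nonneg (ae_of_all _ fun x => abs_nonneg (u x))
    ((memLp_two_sqrt hh hh0).integrable_mul (memLp_two_sqrt hw hw0)) ?_
  filter_upwards [hh0, huhw] with x hx hux
  rw [← sqrt_mul hx, ← sqrt_sq_eq_abs]
  exact sqrt_le_sqrt hux

lemma two_mul_integral_min {f g : α → ℝ} (hf : Integrable f μ) (hg : Integrable g μ) :
    2 * ∫ x, min (f x) (g x) ∂μ = ∫ x, f x ∂μ + ∫ x, g x ∂μ - ∫ x, |f x - g x| ∂μ := by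
  have hmin : ∀ a b : ℝ, 2 * min a b = a + b - |a - b| := fun a b => by
    linarith [min_add_max a b, max_sub_min_eq_abs' a b]
  rw [← integral_const_mul]
  simp_rw [hmin]
  rw [integral_sub (f := fun x => f x + g x) (g := fun x => |f x - g x|) (hf.add hg)
    (hf.sub hg).abs, integral_add hf hg]

variable {f g : α → ℝ}

theorem half_integral_abs_sub_le_sqrt_half_integral_mul_log
    (hf : Integrable f μ) (hg : Integrable g μ) (hf_pos : ∀ᵐ x ∂μ, 0 < f x)
    (hg_pos : ∀ᵐ x ∂μ, 0 < g x) (hf1 : ∫ x, f x ∂μ = 1) (hg1 : ∫ x, g x ∂μ = 1)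
    (hkl : Integrable (fun x => g x * log (g x / f x)) μ) :
    (1 / 2) * ∫ x, |f x - g x| ∂μ ≤ √((1 / 2) * ∫ x, g x * log (g x / f x) ∂μ) := by
  set KL := ∫ x, g x * log (g x / f x) ∂μ
  have hh : Integrable (fun x => g x * log (g x / f x) + f x - g x) μ := (hkl.add hf).sub hg
  have hw : Integrable (fun x => 2 / 3 * (g x + 2 * f x)) μ := (hg.add (hf.const_mul 2)).const_mul _
  have hh0 : ∀ᵐ x ∂μ, 0 ≤ g x * log (g x / f x) + f x - g x := by
    filter_upwards [hf_pos, hg_pos] with x hfx hgx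
    nlinarith [three_mul_sq_sub_le_mul_log_div hgx hfx, sq_nonneg (g x - f x)]
  have hw0 : ∀ᵐ x ∂μ, 0 ≤ 2 / 3 * (g x + 2 * f x) := by
    filter_upwards [hf_pos, hg_pos] with x hfx hgx
    positivity
  have hh_int : ∫ x, g x * log (g x / f x) + f x - g x ∂μ = KL := by
    rw [integral_sub (f := fun x => g x * log (g x / f x) + f x) (hkl.add hf) hg,
      integral_add hkl hf, hf1, hg1]
    ring
  have hw_int : ∫ x, 2 / 3 * (g x + 2 * f x) ∂μ = 2 := by
    rw [integral_const_mul, integral_add hg (hf.const_mul 2), integral_const_mul, hf1, hg1]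
    norm_num
  have hsq : ∀ᵐ x ∂μ, (f x - g x) ^ 2 ≤
      (g x * log (g x / f x) + f x - g x) * (2 / 3 * (g x + 2 * f x)) := by
    filter_upwards [hf_pos, hg_pos] with x hfx hgx
    nlinarith [three_mul_sq_sub_le_mul_log_div hgx hfx]
  have hKL0 : 0 ≤ KL := hh_int ▸ integral_nonneg_of_ae hh0
  calc (1 / 2) * ∫ x, |f x - g x| ∂μ ≤ (1 / 2) * (√KL * √2) := by
        gcongr
        simpa only [hh_int, hw_int] using integral_abs_le_of_sq_le_mul hh hw hh0 hw0 hsq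
    _ = √((1 / 2) * KL) := by
        rw [eq_comm, sqrt_eq_iff_mul_self_eq (by positivity) (by positivity)]
        ring_nf
        rw [sq_sqrt hKL0, sq_sqrt zero_le_two]
        ring

theorem one_sub_sqrt_half_integral_mul_log_le_integral_min
    (hf : Integrable f μ) (hg : Integrable g μ) (hf_pos : ∀ᵐ x ∂μ, 0 < f x)
    (hg_pos : ∀ᵐ x ∂μ, 0 < g x) (hf1 : ∫ x, f x ∂μ = 1) (hg1 : ∫ x, g x ∂μ = 1)
    (hkl : Integrable (fun x => g x * log (g x / f x)) μ) :
    1 - √((1 / 2) * ∫ x, g x * log (g x / f x) ∂μ) ≤ ∫ x, min (f x) (g x) ∂μ := by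
  have hmin := two_mul_integral_min hf hg
  have pinsker :=
    half_integral_abs_sub_le_sqrt_half_integral_mul_log hf hg hf_pos hg_pos hf1 hg1 hkl
  rw [hf1, hg1] at hmin
  linarith

end Integrals

section TransitionDensity

variable {α β : Type*} [MeasurableSpace α] [MeasurableSpace β] {μ : Measure α} {ν : Measure β}
  {p : α → ℝ} {q : β → α → ℝ}

lemma measurable_mul_transition (hp_meas : Measurable p)
    (hq_meas : Measurable (Function.uncurry q)) :
    Measurable fun z : α × β => p z.1 * q z.2 z.1 :=
  (hp_meas.comp measurable_fst).mul (hq_meas.comp (measurable_snd.prodMk measurable_fst))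

variable [SFinite ν]

lemma lintegral_ofReal_mul_transition_eq_one (hp_meas : Measurable p)
    (hq_meas : Measurable (Function.uncurry q)) (hp_nonneg : ∀ x, 0 ≤ p x)
    (hq_nonneg : ∀ y x, 0 ≤ q y x) (hp_int : ∫ x, p x ∂μ = 1) (hq_int : ∀ x, ∫ y, q y x ∂ν = 1) :
    ∫⁻ z, ENNReal.ofReal (p z.1 * q z.2 z.1) ∂μ.prod ν = 1 := by
  rw [lintegral_prod _ (measurable_mul_transition hp_meas hq_meas).ennreal_ofReal.aemeasurable]
  have inner (x : α) : ∫⁻ y, ENNReal.ofReal (p x * q y x) ∂ν = ENNReal.ofReal (p x) := by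
    simp_rw [ENNReal.ofReal_mul (hp_nonneg x)]
    rw [lintegral_const_mul' _ _ ENNReal.ofReal_ne_top,
      ← ofReal_integral_eq_lintegral_ofReal (.of_integral_ne_zero (by simp [hq_int x]))
        (ae_of_all _ fun y => hq_nonneg y x), hq_int x, ENNReal.ofReal_one, mul_one]
  simp_rw [inner]
  rw [← ofReal_integral_eq_lintegral_ofReal (.of_integral_ne_zero (by simp [hp_int]))
    (ae_of_all _ hp_nonneg), hp_int, ENNReal.ofReal_one]

lemma integrable_mul_transition (hp_meas : Measurable p)
    (hq_meas : Measurable (Function.uncurry q)) (hp_nonneg : ∀ x, 0 ≤ p x)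
    (hq_nonneg : ∀ y x, 0 ≤ q y x) (hp_int : ∫ x, p x ∂μ = 1) (hq_int : ∀ x, ∫ y, q y x ∂ν = 1) :
    Integrable (fun z => p z.1 * q z.2 z.1) (μ.prod ν) := by
  refine (lintegral_ofReal_ne_top_iff_integrable
    (measurable_mul_transition hp_meas hq_meas).aestronglyMeasurable
    (ae_of_all _ fun z => mul_nonneg (hp_nonneg _) (hq_nonneg _ _))).1 ?_
  rw [lintegral_ofReal_mul_transition_eq_one hp_meas hq_meas hp_nonneg hq_nonneg hp_int hq_int]
  exact ENNReal.one_ne_top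

lemma integral_mul_transition_eq_one (hp_meas : Measurable p)
    (hq_meas : Measurable (Function.uncurry q)) (hp_nonneg : ∀ x, 0 ≤ p x)
    (hq_nonneg : ∀ y x, 0 ≤ q y x) (hp_int : ∫ x, p x ∂μ = 1) (hq_int : ∀ x, ∫ y, q y x ∂ν = 1) :
    ∫ z, p z.1 * q z.2 z.1 ∂μ.prod ν = 1 := by
  rw [integral_eq_lintegral_of_nonneg_ae
    (ae_of_all _ fun z => mul_nonneg (hp_nonneg _) (hq_nonneg _ _))
    (measurable_mul_transition hp_meas hq_meas).aestronglyMeasurable,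
    lintegral_ofReal_mul_transition_eq_one hp_meas hq_meas hp_nonneg hq_nonneg hp_int hq_int,
    ENNReal.toReal_one]

end TransitionDensity

/-- Eq. (7) of the paper: the Metropolis–Hastings acceptance rate is lower bounded via
Pinsker's inequality by `1 - sqrt((1/2)·KL(p(x')q(x|x') ‖ p(x)q(x'|x)))`, where
`KL(f‖g) = ∫∫ f log(f/g)`. Here `q x' x` denotes the transition density `q(x'|x)`. -/
theorem mh_acceptance_rate_ge_one_sub_sqrt_kl
    {d : ℕ} (p : (Fin d → ℝ) → ℝ) (q : (Fin d → ℝ) → (Fin d → ℝ) → ℝ)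
    (hp_meas : Measurable p) (hq_meas : Measurable (Function.uncurry q))
    (hp_nonneg : ∀ x, 0 ≤ p x) (hq_nonneg : ∀ x' x, 0 ≤ q x' x)
    (hp_int : ∫ x, p x = 1) (hq_int : ∀ x, ∫ x', q x' x = 1)
    (h_pos : ∀ x x', 0 < p x * q x' x)
    (h_kl_int : Integrable (fun z : (Fin d → ℝ) × (Fin d → ℝ) =>
      p z.2 * q z.1 z.2 * Real.log (p z.2 * q z.1 z.2 / (p z.1 * q z.2 z.1)))) :
    ∫ x, ∫ x', p x * q x' x * min 1 (p x' * q x x' / (p x * q x' x)) ≥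
      1 - Real.sqrt ((1 / 2) *
        ∫ x, ∫ x', p x' * q x x' * Real.log (p x' * q x x' / (p x * q x' x))) := by
  set F : (Fin d → ℝ) × (Fin d → ℝ) → ℝ := fun z => p z.1 * q z.2 z.1
  have hF : Integrable F (volume.prod volume) :=
    integrable_mul_transition hp_meas hq_meas hp_nonneg hq_nonneg hp_int hq_int
  have hF1 : ∫ z, F z ∂volume.prod volume = 1 :=
    integral_mul_transition_eq_one hp_meas hq_meas hp_nonneg hq_nonneg hp_int hq_int
  have hacc : ∫ x, ∫ x', p x * q x' x * min 1 (p x' * q x x' / (p x * q x' x)) =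
      ∫ z, min (F z) (F z.swap) ∂volume.prod volume := by
    simp_rw [mul_min_one_div_of_pos (h_pos _ _)]
    exact integral_integral (hF.inf hF.swap)
  rw [ge_iff_le, hacc, integral_integral h_kl_int]
  exact one_sub_sqrt_half_integral_mul_log_le_integral_min hF hF.swap
    (ae_of_all _ fun z => h_pos z.1 z.2) (ae_of_all _ fun z => h_pos z.2 z.1) hF1
    ((integral_prod_swap F).trans hF1) h_kl_int
end

section
/- Let p and q be probability densities on ℝ^d with p(x)·q(x) > 0 for all x. Then the acceptance rate of the independent Metropolis–Hastings algorithm satisfies AR = ∫∫ p(x)q(x') min{1, p(x')q(x)/(p(x)q(x'))} dx dx' ≥ 1 − sqrt( (1/2)·( KL(q‖p) + KL(p‖q) ) ). -/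
/-!
Writing `a = p(x) q(x')` and `b = p(x') q(x)`, the acceptance rate is `∫∫ min a b`, and
`min a b = (a + b) / 2 - |a - b| / 2` turns it into `1 - ½ ∫∫ |a - b|`. Pointwise,
`(a - b)² ≤ (a + b) / 2 · (a - b) log (a / b)` (the logarithmic mean is at most the arithmetic
mean), so Cauchy–Schwarz against the probability density `(a + b) / 2` on the product space
bounds `∫∫ |a - b|` by the square root of `∫∫ (a - b) log (a / b)`. Since
`log (a / b) = L(x) - L(x')` with `L = log (p / q)`, this last integral splits into products of
one-dimensional integrals and equals `2 (KL(p‖q) + KL(q‖p))`.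
-/

open MeasureTheory Real

lemma two_mul_sub_one_le_add_one_mul_log {t : ℝ} (ht : 1 ≤ t) :
    2 * (t - 1) ≤ (t + 1) * log t := by
  let F : ℝ → ℝ := fun s => (s + 1) * log s - 2 * (s - 1)
  have hF : MonotoneOn F (Set.Ici 1) := by
    refine monotoneOn_of_hasDerivWithinAt_nonneg (f' := fun s => log s + (s + 1) * s⁻¹ - 2)
      (convex_Ici 1) ?_ (fun s hs => ?_) (fun s hs => ?_)
    · exact (continuousOn_id.add continuousOn_const).mul
        (continuousOn_log.mono fun s hs => (zero_lt_one.trans_le hs).ne') |>.sub (by fun_prop)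
    all_goals simp only [interior_Ici, Set.mem_Ioi] at hs
    · have hs0 : s ≠ 0 := by positivity
      have hd : HasDerivAt F (log s + (s + 1) * s⁻¹ - 2) s :=
        (((hasDerivAt_id s).add_const 1).mul (hasDerivAt_log hs0)).sub
          (((hasDerivAt_id s).sub_const 1).const_mul 2) |>.congr_deriv (by simp)
      exact hd.hasDerivWithinAt
    · have hs0 : 0 < s := by linarith
      have h := one_sub_inv_le_log_of_pos hs0
      have : (s + 1) * s⁻¹ = 1 + s⁻¹ := by field_simp
      linarith
  simpa [F] using hF Set.self_mem_Ici ht ht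

/-- The logarithmic mean `(a - b) / log (a / b)` is at most the arithmetic mean `(a + b) / 2`. -/
lemma sub_sq_le_add_div_two_mul_sub_mul_log {a b : ℝ} (ha : 0 < a) (hb : 0 < b) :
    (a - b) ^ 2 ≤ (a + b) / 2 * ((a - b) * log (a / b)) := by
  wlog hba : b ≤ a generalizing a b
  · have h := this hb ha (le_of_not_ge hba)
    rw [← inv_div a b, log_inv] at h
    linarith
  have key := two_mul_sub_one_le_add_one_mul_log ((one_le_div hb).2 hba)
  have hc : 0 ≤ (a - b) * b / 2 := by have := sub_nonneg.2 hba; positivity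
  calc (a - b) ^ 2 = (a - b) * b / 2 * (2 * (a / b - 1)) := by field_simp
    _ ≤ (a - b) * b / 2 * ((a / b + 1) * log (a / b)) := mul_le_mul_of_nonneg_left key hc
    _ = (a + b) / 2 * ((a - b) * log (a / b)) := by field_simp

lemma le_sqrt_of_forall_pos_le_add_div {x H : ℝ} (hH : 0 ≤ H)
    (h : ∀ t > 0, x ≤ (t + H / t) / 2) : x ≤ √H := by
  rcases hH.eq_or_lt with rfl | hH
  · rw [sqrt_zero]
    by_contra! hx
    have := h x hx
    rw [zero_div, add_zero] at this
    linarith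
  · simpa [div_sqrt] using h √H (sqrt_pos.2 hH)

lemma mul_min_one_div_eq_min {a b : ℝ} (ha : 0 ≤ a) (hb : 0 ≤ b) :
    a * min 1 (b / a) = min a b := by
  rcases ha.eq_or_lt with rfl | ha
  · simp [hb]
  · rw [mul_min_of_nonneg _ _ ha.le, mul_one, mul_div_cancel₀ _ ha.ne']

lemma sub_mul_sub_eq_add_sub {α : Type*} (p q L : α → ℝ) :
    (fun z : α × α => (p z.1 * q z.2 - q z.1 * p z.2) * (L z.1 - L z.2)) =
      fun z => (p z.1 * L z.1) * q z.2 + q z.1 * (p z.2 * L z.2) -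
        (p z.1 * (q z.2 * L z.2) + (q z.1 * L z.1) * p z.2) := by
  ext z; ring

section

variable {α : Type*} [MeasurableSpace α] {μ : Measure α}

/-- Cauchy–Schwarz, via the AM–GM bound `f ≤ (t g + h / t) / 2` optimized over `t > 0`. -/
lemma integral_le_sqrt_integral_of_sq_le_mul {f g h : α → ℝ} (hg : Integrable g μ)
    (hh : Integrable h μ) (hg0 : ∀ x, 0 ≤ g x) (hh0 : ∀ x, 0 ≤ h x) (hg1 : ∫ x, g x ∂μ = 1)
    (hfgh : ∀ x, f x ^ 2 ≤ g x * h x) : ∫ x, f x ∂μ ≤ √(∫ x, h x ∂μ) := by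
  by_cases hf : ¬Integrable f μ
  · rw [integral_undef hf]; exact sqrt_nonneg _
  refine le_sqrt_of_forall_pos_le_add_div (integral_nonneg hh0) fun t ht => ?_
  have amgm : ∀ x, f x ≤ (t * g x + h x / t) / 2 := fun x => by
    have hu : 0 ≤ t * g x := mul_nonneg ht.le (hg0 x)
    have hv : 0 ≤ h x / t := div_nonneg (hh0 x) ht.le
    have huv : t * g x * (h x / t) = g x * h x := by field_simp
    nlinarith [hfgh x, sq_nonneg (t * g x - h x / t)]
  calc ∫ x, f x ∂μ ≤ ∫ x, (t * g x + h x / t) / 2 ∂μ :=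
        integral_mono (not_not.1 hf) (((hg.const_mul t).add (hh.div_const t)).div_const 2) amgm
    _ = (t + (∫ x, h x ∂μ) / t) / 2 := by
        rw [integral_div, integral_add (hg.const_mul t) (hh.div_const t), integral_const_mul,
          integral_div, hg1, mul_one]

variable {p q L : α → ℝ}

lemma integrable_prod_sub_mul_sub (hp : Integrable p μ) (hq : Integrable q μ)
    (hpL : Integrable (fun x => p x * L x) μ) (hqL : Integrable (fun x => q x * L x) μ) :
    Integrable (fun z : α × α => (p z.1 * q z.2 - q z.1 * p z.2) * (L z.1 - L z.2)) (μ.prod μ) := by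
  rw [sub_mul_sub_eq_add_sub]
  exact ((hpL.mul_prod hq).add (hq.mul_prod hpL)).sub ((hp.mul_prod hqL).add (hqL.mul_prod hp))

variable [SFinite μ]

lemma integral_integral_mul_min_one_div_eq (hp : Integrable p μ) (hq : Integrable q μ)
    (hp0 : ∀ x, 0 ≤ p x) (hq0 : ∀ x, 0 ≤ q x) :
    ∫ x, ∫ x', p x * q x' * min 1 (p x' * q x / (p x * q x')) ∂μ ∂μ =
      (∫ x, p x ∂μ) * (∫ x, q x ∂μ) -
        (∫ z, |p z.1 * q z.2 - q z.1 * p z.2| ∂μ.prod μ) / 2 := by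
  have ha : Integrable (fun z : α × α => p z.1 * q z.2) (μ.prod μ) := hp.mul_prod hq
  have hb : Integrable (fun z : α × α => q z.1 * p z.2) (μ.prod μ) := hq.mul_prod hp
  have hmin : ∀ a b : ℝ, min a b = (a + b - |a - b|) / 2 := fun a b => by
    linarith [min_add_max a b, max_sub_min_eq_abs' a b]
  calc ∫ x, ∫ x', p x * q x' * min 1 (p x' * q x / (p x * q x')) ∂μ ∂μ
      = ∫ x, ∫ x', (p x * q x' + q x * p x' - |p x * q x' - q x * p x'|) / 2 ∂μ ∂μ := by
        congr 1 with x; congr 1 with x'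
        rw [mul_comm (p x'), mul_min_one_div_eq_min (mul_nonneg (hp0 _) (hq0 _))
          (mul_nonneg (hq0 _) (hp0 _)), hmin]
    _ = ∫ z, (p z.1 * q z.2 + q z.1 * p z.2 - |p z.1 * q z.2 - q z.1 * p z.2|) / 2 ∂μ.prod μ :=
        (integral_prod _ (((ha.add hb).sub (ha.sub hb).abs).div_const 2)).symm
    _ = _ := by
        rw [integral_div, integral_sub ?_ ?_, integral_add ha hb,
          integral_prod_mul p q, integral_prod_mul q p]
        · ring
        · exact ha.add hb
        · exact (ha.sub hb).abs

lemma integral_prod_sub_mul_sub (hp : Integrable p μ) (hq : Integrable q μ)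
    (hpL : Integrable (fun x => p x * L x) μ) (hqL : Integrable (fun x => q x * L x) μ) :
    ∫ z, (p z.1 * q z.2 - q z.1 * p z.2) * (L z.1 - L z.2) ∂μ.prod μ =
      2 * ((∫ x, p x * L x ∂μ) * (∫ x, q x ∂μ) - (∫ x, p x ∂μ) * ∫ x, q x * L x ∂μ) := by
  rw [sub_mul_sub_eq_add_sub, integral_sub ?_ ?_, integral_add (hpL.mul_prod hq) (hq.mul_prod hpL),
    integral_add (hp.mul_prod hqL) (hqL.mul_prod hp), integral_prod_mul (fun x => p x * L x) q,
    integral_prod_mul q (fun x => p x * L x), integral_prod_mul p (fun x => q x * L x),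
    integral_prod_mul (fun x => q x * L x) p]
  · ring
  · exact (hpL.mul_prod hq).add (hq.mul_prod hpL)
  · exact (hp.mul_prod hqL).add (hqL.mul_prod hp)

lemma integral_prod_abs_sub_le_sqrt (hp_pos : ∀ x, 0 < p x) (hq_pos : ∀ x, 0 < q x)
    (hp : Integrable p μ) (hq : Integrable q μ) (hp1 : ∫ x, p x ∂μ = 1) (hq1 : ∫ x, q x ∂μ = 1)
    (hpL : Integrable (fun x => p x * log (p x / q x)) μ)
    (hqL : Integrable (fun x => q x * log (p x / q x)) μ) :
    ∫ z, |p z.1 * q z.2 - q z.1 * p z.2| ∂μ.prod μ ≤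
      √(2 * (∫ x, p x * log (p x / q x) ∂μ - ∫ x, q x * log (p x / q x) ∂μ)) := by
  have ha : Integrable (fun z : α × α => p z.1 * q z.2) (μ.prod μ) := hp.mul_prod hq
  have hb : Integrable (fun z : α × α => q z.1 * p z.2) (μ.prod μ) := hq.mul_prod hp
  have hlog : ∀ z : α × α, log (p z.1 * q z.2 / (q z.1 * p z.2)) =
      log (p z.1 / q z.1) - log (p z.2 / q z.2) := fun z => by
    have := hp_pos z.1; have := hp_pos z.2; have := hq_pos z.1; have := hq_pos z.2
    rw [← log_div (by positivity) (by positivity)]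
    congr 1
    field_simp
  have hpointwise : ∀ z : α × α, (p z.1 * q z.2 - q z.1 * p z.2) ^ 2 ≤
      (p z.1 * q z.2 + q z.1 * p z.2) / 2 *
        ((p z.1 * q z.2 - q z.1 * p z.2) * (log (p z.1 / q z.1) - log (p z.2 / q z.2))) :=
    fun z => hlog z ▸ sub_sq_le_add_div_two_mul_sub_mul_log
      (mul_pos (hp_pos _) (hq_pos _)) (mul_pos (hq_pos _) (hp_pos _))
  have hS := integral_prod_sub_mul_sub hp hq hpL hqL
  rw [hp1, hq1, mul_one, one_mul] at hS
  rw [← hS]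
  refine integral_le_sqrt_integral_of_sq_le_mul
    (g := fun z => (p z.1 * q z.2 + q z.1 * p z.2) / 2) ((ha.add hb).div_const 2)
    (integrable_prod_sub_mul_sub hp hq hpL hqL)
    (fun z => div_nonneg (add_nonneg (mul_pos (hp_pos _) (hq_pos _)).le
      (mul_pos (hq_pos _) (hp_pos _)).le) zero_le_two)
    (fun z => nonneg_of_mul_nonneg_right ((sq_nonneg _).trans (hpointwise z))
      (by linarith [mul_pos (hp_pos z.1) (hq_pos z.2), mul_pos (hq_pos z.1) (hp_pos z.2)]))
    ?_ (fun z => by rw [sq_abs]; exact hpointwise z)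
  rw [integral_div, integral_add ha hb, integral_prod_mul p q, integral_prod_mul q p, hp1, hq1]
  norm_num

end

theorem imh_acceptance_rate_ge_one_sub_sqrt_sym_kl_general
    {d : ℕ} (p q : (Fin d → ℝ) → ℝ)
    (hp_nonneg : ∀ x, 0 ≤ p x) (hq_nonneg : ∀ x, 0 ≤ q x)
    (hp_int : ∫ x, p x = 1) (hq_int : ∫ x, q x = 1)
    (h_pos : ∀ x, 0 < p x * q x)
    (h_qp_int : Integrable (fun x => q x * Real.log (q x / p x)))
    (h_pq_int : Integrable (fun x => p x * Real.log (p x / q x))) :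
    ∫ x, ∫ x', p x * q x' * min 1 (p x' * q x / (p x * q x')) ≥
      1 - Real.sqrt ((1 / 2) *
        ((∫ x, q x * Real.log (q x / p x)) + ∫ x, p x * Real.log (p x / q x))) := by
  have hp_pos : ∀ x, 0 < p x := fun x =>
    (hp_nonneg x).lt_of_ne fun h => by simpa [← h] using h_pos x
  have hq_pos : ∀ x, 0 < q x := fun x =>
    (hq_nonneg x).lt_of_ne fun h => by simpa [← h] using h_pos x
  have hp : Integrable p := .of_integral_ne_zero (by rw [hp_int]; exact one_ne_zero)
  have hq : Integrable q := .of_integral_ne_zero (by rw [hq_int]; exact one_ne_zero)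
  have hqL : (fun x => q x * log (p x / q x)) = fun x => -(q x * log (q x / p x)) := by
    ext x; rw [← inv_div, log_inv, mul_neg]
  have hTV := integral_prod_abs_sub_le_sqrt hp_pos hq_pos hp hq hp_int hq_int h_pq_int
    (hqL ▸ h_qp_int.neg)
  set Kqp := ∫ x, q x * log (q x / p x)
  set Kpq := ∫ x, p x * log (p x / q x)
  have hsqrt : √(2 * (Kpq + Kqp)) = 2 * √(1 / 2 * (Kqp + Kpq)) := by
    rw [show 2 * (Kpq + Kqp) = 2 ^ 2 * (1 / 2 * (Kqp + Kpq)) by ring, sqrt_mul (by norm_num),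
      sqrt_sq zero_le_two]
  rw [hqL, integral_neg, sub_neg_eq_add, hsqrt] at hTV
  rw [ge_iff_le, integral_integral_mul_min_one_div_eq hp hq hp_nonneg hq_nonneg, hp_int, hq_int]
  linarith

/-- Eq. (8) of the paper: the independent Metropolis–Hastings acceptance rate is lower
bounded by one minus the square root of half the symmetrized KL divergence between the
proposal `q` and the target `p`. -/
theorem imh_acceptance_rate_ge_one_sub_sqrt_sym_kl
    {d : ℕ} (p q : (Fin d → ℝ) → ℝ)
    (hp_meas : Measurable p) (hq_meas : Measurable q)
    (hp_nonneg : ∀ x, 0 ≤ p x) (hq_nonneg : ∀ x, 0 ≤ q x)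
    (hp_int : ∫ x, p x = 1) (hq_int : ∫ x, q x = 1)
    (h_pos : ∀ x, 0 < p x * q x)
    (h_qp_int : Integrable (fun x => q x * Real.log (q x / p x)))
    (h_pq_int : Integrable (fun x => p x * Real.log (p x / q x))) :
    ∫ x, ∫ x', p x * q x' * min 1 (p x' * q x / (p x * q x')) ≥
      1 - Real.sqrt ((1 / 2) *
        ((∫ x, q x * Real.log (q x / p x)) + ∫ x, p x * Real.log (p x / q x))) :=
  imh_acceptance_rate_ge_one_sub_sqrt_sym_kl_general p q hp_nonneg hq_nonneg hp_int hq_int h_pos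
    h_qp_int h_pq_int
end

section
/- Let p and q be probability densities on ℝ^d with p(x) > 0 for all x, and suppose there exists M > 0 such that M·q(x) ≥ p(x) for all x. Then the independent Metropolis–Hastings acceptance rate satisfies ∫∫ p(x)p(x') min{ q(x)/p(x), q(x')/p(x') } dx dx' ≥ 1/M; that is, it is at least the acceptance rate 1/M of rejection sampling with the same proposal q and majorization constant M. -/
open MeasureTheory

/-- The independent Metropolis–Hastings acceptance rate is at least the acceptance
rate `1/M` of rejection sampling with the same proposal `q` and majorization constant
`M` satisfying `M·q(x) ≥ p(x)` for all `x`. -/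
theorem imh_acceptance_rate_ge_rejection_sampling
    {d : ℕ} (p q : (Fin d → ℝ) → ℝ)
    (hp_meas : Measurable p) (hq_meas : Measurable q)
    (hp_pos : ∀ x, 0 < p x) (hq_nonneg : ∀ x, 0 ≤ q x)
    (hp_int : ∫ x, p x = 1) (hq_int : ∫ x, q x = 1)
    (M : ℝ) (hM : 0 < M) (h_maj : ∀ x, p x ≤ M * q x) :
    ∫ x, ∫ x', p x * p x' * min (q x / p x) (q x' / p x') ≥ 1 / M := by
  have hp_integ : Integrable p := by
    by_contra h
    rw [integral_undef h] at hp_int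
    norm_num at hp_int
  have hq_integ : Integrable q := by
    by_contra h
    rw [integral_undef h] at hq_int
    norm_num at hq_int
  have hmin : ∀ x, 1 / M ≤ q x / p x := by
    intro x
    rw [div_le_div_iff₀ hM (hp_pos x)]
    nlinarith [h_maj x]
  have hF_nonneg : ∀ x x', 0 ≤ p x * p x' * min (q x / p x) (q x' / p x') := by
    intro x x'
    exact mul_nonneg (mul_nonneg (hp_pos x).le (hp_pos x').le)
      (le_min (div_nonneg (hq_nonneg x) (hp_pos x).le)
        (div_nonneg (hq_nonneg x') (hp_pos x').le))
  have hF_le : ∀ x x', p x * p x' * min (q x / p x) (q x' / p x') ≤ p x * q x' := by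
    intro x x'
    calc p x * p x' * min (q x / p x) (q x' / p x')
        ≤ p x * p x' * (q x' / p x') :=
          mul_le_mul_of_nonneg_left (min_le_right _ _)
            (mul_nonneg (hp_pos x).le (hp_pos x').le)
      _ = p x * q x' := by
          rw [mul_assoc, mul_div_cancel₀ _ (hp_pos x').ne']
  have hF_ge : ∀ x x', p x * p x' * (1 / M) ≤ p x * p x' * min (q x / p x) (q x' / p x') :=
    fun x x' => mul_le_mul_of_nonneg_left (le_min (hmin x) (hmin x'))
      (mul_nonneg (hp_pos x).le (hp_pos x').le)
  -- measurability of the two-variable integrand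
  have hF_meas : Measurable (fun z : (Fin d → ℝ) × (Fin d → ℝ) =>
      p z.1 * p z.2 * min (q z.1 / p z.1) (q z.2 / p z.2)) := by
    have h1 : Measurable fun z : (Fin d → ℝ) × (Fin d → ℝ) => p z.1 :=
      hp_meas.comp measurable_fst
    have h2 : Measurable fun z : (Fin d → ℝ) × (Fin d → ℝ) => p z.2 :=
      hp_meas.comp measurable_snd
    have h3 : Measurable fun z : (Fin d → ℝ) × (Fin d → ℝ) => q z.1 :=
      hq_meas.comp measurable_fst
    have h4 : Measurable fun z : (Fin d → ℝ) × (Fin d → ℝ) => q z.2 :=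
      hq_meas.comp measurable_snd
    exact (h1.mul h2).mul ((h3.div h1).min (h4.div h2))
  -- integrability on the product space
  have hbound : Integrable (fun z : (Fin d → ℝ) × (Fin d → ℝ) => p z.1 * q z.2)
      (volume.prod volume) := hp_integ.mul_prod hq_integ
  have hF_int : Integrable (fun z : (Fin d → ℝ) × (Fin d → ℝ) =>
      p z.1 * p z.2 * min (q z.1 / p z.1) (q z.2 / p z.2)) (volume.prod volume) := by
    refine hbound.mono' hF_meas.aestronglyMeasurable (Filter.Eventually.of_forall ?_)
    intro z
    rw [Real.norm_eq_abs, abs_of_nonneg (hF_nonneg z.1 z.2)]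
    exact hF_le z.1 z.2
  -- inner-integral function is integrable
  have hInner_int : Integrable (fun x => ∫ x', p x * p x' * min (q x / p x) (q x' / p x')) :=
    hF_int.integral_prod_left
  -- inner integrand integrable for each x
  have hInner_integrand : ∀ x, Integrable
      (fun x' => p x * p x' * min (q x / p x) (q x' / p x')) := by
    intro x
    have hb : Integrable (fun x' => p x * q x') := hq_integ.const_mul (p x)
    refine hb.mono' ?_ (Filter.Eventually.of_forall fun x' => ?_)
    · exact (((measurable_const.mul hp_meas).mul
        (measurable_const.min (hq_meas.div hp_meas)))).aestronglyMeasurable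
    · rw [Real.norm_eq_abs, abs_of_nonneg (hF_nonneg x x')]
      exact hF_le x x'
  -- lower bound the inner integral pointwise
  have hInner_ge : ∀ x, p x * (1 / M) ≤
      ∫ x', p x * p x' * min (q x / p x) (q x' / p x') := by
    intro x
    have h1 : ∫ x', p x * p x' * (1 / M) = p x * (1 / M) := by
      have : (fun x' => p x * p x' * (1 / M)) = fun x' => (p x * (1 / M)) * p x' := by
        funext x'; ring
      rw [this, integral_const_mul, hp_int, mul_one]
    calc p x * (1 / M) = ∫ x', p x * p x' * (1 / M) := h1.symm
      _ ≤ ∫ x', p x * p x' * min (q x / p x) (q x' / p x') := by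
          apply integral_mono ?_ (hInner_integrand x) (fun x' => hF_ge x x')
          have : (fun x' => p x * p x' * (1 / M)) = fun x' => (p x * (1 / M)) * p x' := by
            funext x'; ring
          rw [this]
          exact hp_integ.const_mul _
  -- conclude
  have : 1 / M = ∫ x, p x * (1 / M) := by
    rw [integral_mul_const, hp_int, one_mul]
  rw [ge_iff_le, this]
  exact integral_mono (hp_integ.mul_const _) hInner_int hInner_ge
end

section
/- Let p, q, s be probability densities on ℝ^d and define D(p,q) = ∫∫ |p(x)q(y) − p(y)q(x)| dx dy. Then the weak triangle inequality D(p,s) + D(q,s) ≥ (2/3)·D(p,q) holds. -/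
/-!
Multiplying `p x q y - p y q x` by `s z` and expanding,
`(p x q y - p y q x) s z
  = q y (p x s z - p z s x) - p z (q x s y - q y s x) - q x (p y s z - p z s y)`.
Taking absolute values and integrating over `x, y, z`, the normalisations
`∫ |p| = ∫ |q| = ∫ |s| = 1` give `D(p,q) ≤ 2 D(p,s) + D(q,s)`; adding the same bound with `p` and
`q` exchanged and using the symmetry of `D` yields `2 D(p,q) ≤ 3 (D(p,s) + D(q,s))`.
-/

open MeasureTheory

open scoped ENNReal

section

variable {α : Type*} [MeasurableSpace α] {μ : Measure α}

theorem lintegral_enorm_eq_one_of_integral_eq_one {f : α → ℝ} (hf₀ : ∀ x, 0 ≤ f x)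
    (hf : ∫ x, f x ∂μ = 1) :
    ∫⁻ x, ‖f x‖ₑ ∂μ = 1 := by
  rw [← ofReal_integral_norm_eq_lintegral_enorm (integrable_of_integral_eq_one hf)]
  simp [Real.norm_of_nonneg (hf₀ _), hf]

noncomputable def crossSlice (μ : Measure α) (f g : α → ℝ) (x : α) : ℝ≥0∞ :=
  ∫⁻ y, ‖f x * g y - f y * g x‖ₑ ∂μ

/-- The paper's `D`, valued in `ℝ≥0∞` so that no integrability side conditions arise. -/
noncomputable def crossDist (μ : Measure α) (f g : α → ℝ) : ℝ≥0∞ :=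
  ∫⁻ x, crossSlice μ f g x ∂μ

theorem crossDist_comm (f g : α → ℝ) : crossDist μ g f = crossDist μ f g := by
  refine lintegral_congr fun x => lintegral_congr fun y => ?_
  rw [← enorm_neg]
  ring_nf

theorem measurable_crossSlice [SFinite μ] {f g : α → ℝ} (hf : Measurable f) (hg : Measurable g) :
    Measurable (crossSlice μ f g) :=
  Measurable.lintegral_prod_right' (f := fun z : α × α => ‖f z.1 * g z.2 - f z.2 * g z.1‖ₑ)
    (by fun_prop)

theorem crossSlice_le {f g : α → ℝ} (hf : Measurable f) (x : α) :
    crossSlice μ f g x ≤ ‖f x‖ₑ * ∫⁻ y, ‖g y‖ₑ ∂μ + (∫⁻ y, ‖f y‖ₑ ∂μ) * ‖g x‖ₑ :=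
  calc crossSlice μ f g x ≤ ∫⁻ y, (‖f x‖ₑ * ‖g y‖ₑ + ‖f y‖ₑ * ‖g x‖ₑ) ∂μ :=
        lintegral_mono fun y => by rw [← enorm_mul, ← enorm_mul]; exact enorm_sub_le
    _ = _ := by
      rw [lintegral_add_right _ (by fun_prop), lintegral_const_mul' _ _ enorm_ne_top,
        lintegral_mul_const' _ _ enorm_ne_top]

theorem crossDist_le {f g : α → ℝ} (hf : Measurable f) (hg : Measurable g) :
    crossDist μ f g ≤ 2 * (∫⁻ x, ‖f x‖ₑ ∂μ) * ∫⁻ x, ‖g x‖ₑ ∂μ :=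
  calc crossDist μ f g
      ≤ ∫⁻ x, (‖f x‖ₑ * ∫⁻ y, ‖g y‖ₑ ∂μ + (∫⁻ y, ‖f y‖ₑ ∂μ) * ‖g x‖ₑ) ∂μ :=
        lintegral_mono (crossSlice_le hf)
    _ = _ := by
      rw [lintegral_add_right _ (by fun_prop), lintegral_mul_const'' _ (by fun_prop),
        lintegral_const_mul'' _ (by fun_prop)]
      ring

theorem crossDist_ne_top {f g : α → ℝ} (hf : Measurable f) (hg : Measurable g)
    (hf_fin : ∫⁻ x, ‖f x‖ₑ ∂μ ≠ ∞) (hg_fin : ∫⁻ x, ‖g x‖ₑ ∂μ ≠ ∞) : crossDist μ f g ≠ ∞ :=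
  ((crossDist_le hf hg).trans_lt (by finiteness)).ne

theorem enorm_cross_mul_le (px py pz qx qy sx sy sz : ℝ) :
    ‖px * qy - py * qx‖ₑ * ‖sz‖ₑ ≤
      ‖qy‖ₑ * ‖px * sz - pz * sx‖ₑ + ‖pz‖ₑ * ‖qx * sy - qy * sx‖ₑ
        + ‖qx‖ₑ * ‖py * sz - pz * sy‖ₑ := by
  have h : (px * qy - py * qx) * sz
      = qy * (px * sz - pz * sx) - pz * (qx * sy - qy * sx) - qx * (py * sz - pz * sy) := by
    ring
  simp only [← enorm_mul]
  rw [h]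
  exact enorm_sub_le.trans (add_le_add_left enorm_sub_le _)

theorem enorm_cross_le_crossSlice {p q s : α → ℝ} (hp : Measurable p) (hs : Measurable s)
    (hp_one : ∫⁻ x, ‖p x‖ₑ ∂μ = 1) (hs_one : ∫⁻ x, ‖s x‖ₑ ∂μ = 1) (x y : α) :
    ‖p x * q y - p y * q x‖ₑ ≤
      ‖q y‖ₑ * crossSlice μ p s x + ‖q x * s y - q y * s x‖ₑ
        + ‖q x‖ₑ * crossSlice μ p s y :=
  calc ‖p x * q y - p y * q x‖ₑ = ∫⁻ z, ‖p x * q y - p y * q x‖ₑ * ‖s z‖ₑ ∂μ := by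
        rw [lintegral_const_mul' _ _ enorm_ne_top, hs_one, mul_one]
    _ ≤ ∫⁻ z, (‖q y‖ₑ * ‖p x * s z - p z * s x‖ₑ + ‖p z‖ₑ * ‖q x * s y - q y * s x‖ₑ
          + ‖q x‖ₑ * ‖p y * s z - p z * s y‖ₑ) ∂μ :=
        lintegral_mono fun z => enorm_cross_mul_le ..
    _ = _ := by
      rw [lintegral_add_right _ (by fun_prop), lintegral_add_left (by fun_prop),
        lintegral_const_mul' _ _ enorm_ne_top, lintegral_mul_const' _ _ enorm_ne_top,
        lintegral_const_mul' _ _ enorm_ne_top, hp_one, one_mul]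
      rfl

theorem crossDist_le_two_mul_add [SFinite μ] {p q s : α → ℝ}
    (hp : Measurable p) (hq : Measurable q) (hs : Measurable s)
    (hp_one : ∫⁻ x, ‖p x‖ₑ ∂μ = 1) (hq_one : ∫⁻ x, ‖q x‖ₑ ∂μ = 1)
    (hs_one : ∫⁻ x, ‖s x‖ₑ ∂μ = 1) :
    crossDist μ p q ≤ 2 * crossDist μ p s + crossDist μ q s := by
  have hps := measurable_crossSlice (μ := μ) hp hs
  calc crossDist μ p q
      ≤ ∫⁻ x, ∫⁻ y, (‖q y‖ₑ * crossSlice μ p s x + ‖q x * s y - q y * s x‖ₑ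
          + ‖q x‖ₑ * crossSlice μ p s y) ∂μ ∂μ :=
        lintegral_mono fun x => lintegral_mono (enorm_cross_le_crossSlice hp hs hp_one hs_one x)
    _ = ∫⁻ x, (crossSlice μ p s x + crossSlice μ q s x + ‖q x‖ₑ * crossDist μ p s) ∂μ := by
      refine lintegral_congr fun x => ?_
      rw [lintegral_add_right _ (by fun_prop), lintegral_add_right _ (by fun_prop),
        lintegral_mul_const'' _ (by fun_prop), lintegral_const_mul'' _ hps.aemeasurable,
        hq_one, one_mul]
      rfl
    _ = crossDist μ p s + crossDist μ q s + 1 * crossDist μ p s := by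
      rw [lintegral_add_right _ (by fun_prop), lintegral_add_right _ (measurable_crossSlice hq hs),
        lintegral_mul_const'' _ (by fun_prop), hq_one]
      rfl
    _ = 2 * crossDist μ p s + crossDist μ q s := by ring

theorem two_mul_crossDist_le [SFinite μ] {p q s : α → ℝ}
    (hp : Measurable p) (hq : Measurable q) (hs : Measurable s)
    (hp_one : ∫⁻ x, ‖p x‖ₑ ∂μ = 1) (hq_one : ∫⁻ x, ‖q x‖ₑ ∂μ = 1)
    (hs_one : ∫⁻ x, ‖s x‖ₑ ∂μ = 1) :
    2 * crossDist μ p q ≤ 3 * (crossDist μ p s + crossDist μ q s) := by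
  have hpq := crossDist_le_two_mul_add hp hq hs hp_one hq_one hs_one
  have hqp := crossDist_le_two_mul_add hq hp hs hq_one hp_one hs_one
  rw [crossDist_comm] at hqp
  calc 2 * crossDist μ p q = crossDist μ p q + crossDist μ p q := two_mul _
    _ ≤ (2 * crossDist μ p s + crossDist μ q s) + (2 * crossDist μ q s + crossDist μ p s) :=
        add_le_add hpq hqp
    _ = 3 * (crossDist μ p s + crossDist μ q s) := by ring

theorem integral_integral_abs_eq_toReal_crossDist [SFinite μ] {f g : α → ℝ}
    (hf : Measurable f) (hg : Measurable g)
    (hf_fin : ∫⁻ x, ‖f x‖ₑ ∂μ ≠ ∞) (hg_fin : ∫⁻ x, ‖g x‖ₑ ∂μ ≠ ∞) :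
    ∫ x, ∫ y, |f x * g y - f y * g x| ∂μ ∂μ = (crossDist μ f g).toReal := by
  have hslice (x : α) : ∫ y, |f x * g y - f y * g x| ∂μ = (crossSlice μ f g x).toReal :=
    integral_norm_eq_lintegral_enorm (f := fun y => f x * g y - f y * g x) (by fun_prop)
  simp_rw [hslice]
  refine integral_toReal (measurable_crossSlice hf hg).aemeasurable (ae_of_all _ fun x => ?_)
  exact (crossSlice_le hf x).trans_lt (by finiteness)

end

/-- The weak triangle inequality for the semimetric
`D(p,q) = ∫∫ |p(x)q(y) − p(y)q(x)| dx dy`: for probability densities `p, q, s`,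
`D(p,s) + D(q,s) ≥ (2/3)·D(p,q)`. -/
theorem semimetric_weak_triangle
    {d : ℕ} (p q s : (Fin d → ℝ) → ℝ)
    (hp_meas : Measurable p) (hq_meas : Measurable q) (hs_meas : Measurable s)
    (hp_nonneg : ∀ x, 0 ≤ p x) (hq_nonneg : ∀ x, 0 ≤ q x) (hs_nonneg : ∀ x, 0 ≤ s x)
    (hp_int : ∫ x, p x = 1) (hq_int : ∫ x, q x = 1) (hs_int : ∫ x, s x = 1) :
    (∫ x, ∫ y, |p x * s y - p y * s x|) + (∫ x, ∫ y, |q x * s y - q y * s x|) ≥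
      (2 / 3) * ∫ x, ∫ y, |p x * q y - p y * q x| := by
  have hp_one := lintegral_enorm_eq_one_of_integral_eq_one hp_nonneg hp_int
  have hq_one := lintegral_enorm_eq_one_of_integral_eq_one hq_nonneg hq_int
  have hs_one := lintegral_enorm_eq_one_of_integral_eq_one hs_nonneg hs_int
  have hp_fin : ∫⁻ x, ‖p x‖ₑ ≠ ∞ := by simp [hp_one]
  have hq_fin : ∫⁻ x, ‖q x‖ₑ ≠ ∞ := by simp [hq_one]
  have hs_fin : ∫⁻ x, ‖s x‖ₑ ≠ ∞ := by simp [hs_one]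
  have hps_fin := crossDist_ne_top hp_meas hs_meas hp_fin hs_fin
  have hqs_fin := crossDist_ne_top hq_meas hs_meas hq_fin hs_fin
  have h := ENNReal.toReal_mono (by finiteness)
    (two_mul_crossDist_le hp_meas hq_meas hs_meas hp_one hq_one hs_one)
  simp only [ENNReal.toReal_mul, ENNReal.toReal_ofNat, ENNReal.toReal_add hps_fin hqs_fin] at h
  rw [integral_integral_abs_eq_toReal_crossDist hp_meas hs_meas hp_fin hs_fin,
    integral_integral_abs_eq_toReal_crossDist hq_meas hs_meas hq_fin hs_fin,
    integral_integral_abs_eq_toReal_crossDist hp_meas hq_meas hp_fin hq_fin]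
  linarith
end

section
/- Define φ(x) = ∫₀ˣ exp(−t²/2) dt. For all x > 0, x² − 1 + x·exp(−x²/2)/φ(x) ≤ x²·(x² + 2)/(x² + 3). -/
/-!
With `φ(x) = ∫₀ˣ e^{-t²/2} dt`, the function `φ(u) - u (u² + 3)/3 · e^{-u²/2}` vanishes at `0`
and has derivative `u⁴/3 · e^{-u²/2} ≥ 0`, so `x e^{-x²/2} / φ(x) ≤ 3 / (x² + 3)` for `x > 0`.
The theorem follows since `x² (x² + 2) / (x² + 3) = x² - 1 + 3 / (x² + 3)`.
-/

open Real

lemma continuous_exp_neg_sq_half : Continuous fun t : ℝ => exp (-t ^ 2 / 2) := by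
  fun_prop

lemma hasDerivAt_exp_neg_sq_half (y : ℝ) :
    HasDerivAt (fun u : ℝ => exp (-u ^ 2 / 2)) (-y * exp (-y ^ 2 / 2)) y := by
  have hexponent : HasDerivAt (fun u : ℝ => -u ^ 2 / 2) (-y) y :=
    ((hasDerivAt_pow 2 y).neg.div_const 2).congr_deriv (by ring)
  simpa only [mul_comm] using hexponent.exp

lemma hasDerivAt_integral_exp_neg_sq_half_sub (y : ℝ) :
    HasDerivAt (fun u : ℝ => (∫ t in (0 : ℝ)..u, exp (-t ^ 2 / 2))
        - u * (u ^ 2 + 3) / 3 * exp (-u ^ 2 / 2))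
      (y ^ 4 / 3 * exp (-y ^ 2 / 2)) y := by
  have hintegral := (continuous_exp_neg_sq_half.integral_hasStrictDerivAt 0 y).hasDerivAt
  have hcubic : HasDerivAt (fun u : ℝ => u * (u ^ 2 + 3) / 3) (y ^ 2 + 1) y :=
    (((hasDerivAt_id y).mul ((hasDerivAt_pow 2 y).add_const 3)).div_const 3).congr_deriv
      (by simp only [id]; ring)
  exact (hintegral.sub (hcubic.mul (hasDerivAt_exp_neg_sq_half y))).congr_deriv (by ring)

lemma mul_exp_neg_sq_half_le_integral {x : ℝ} (hx : 0 ≤ x) :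
    x * (x ^ 2 + 3) / 3 * exp (-x ^ 2 / 2) ≤ ∫ t in (0 : ℝ)..x, exp (-t ^ 2 / 2) := by
  have hmono := monotone_of_hasDerivAt_nonneg hasDerivAt_integral_exp_neg_sq_half_sub
    fun y => by positivity
  simpa [sub_nonneg] using hmono hx

lemma integral_exp_neg_sq_half_pos {x : ℝ} (hx : 0 < x) :
    0 < ∫ t in (0 : ℝ)..x, exp (-t ^ 2 / 2) :=
  intervalIntegral.intervalIntegral_pos_of_pos (continuous_exp_neg_sq_half.intervalIntegrable 0 x)
    (fun _ => exp_pos _) hx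

lemma mul_exp_neg_sq_half_div_integral_le {x : ℝ} (hx : 0 < x) :
    x * exp (-x ^ 2 / 2) / (∫ t in (0 : ℝ)..x, exp (-t ^ 2 / 2)) ≤ 3 / (x ^ 2 + 3) := by
  rw [div_le_div_iff₀ (integral_exp_neg_sq_half_pos hx) (by positivity)]
  have hlower := mul_exp_neg_sq_half_le_integral hx.le
  calc x * exp (-x ^ 2 / 2) * (x ^ 2 + 3) = 3 * (x * (x ^ 2 + 3) / 3 * exp (-x ^ 2 / 2)) := by
        ring
    _ ≤ 3 * ∫ t in (0 : ℝ)..x, exp (-t ^ 2 / 2) := by gcongr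

/-- For `φ(x) = ∫₀ˣ exp(−t²/2) dt` and all `x > 0`:
`x² − 1 + x·exp(−x²/2)/φ(x) ≤ x²·(x² + 2)/(x² + 3)`. -/
theorem sq_sub_one_add_le (x : ℝ) (hx : 0 < x) :
    x ^ 2 - 1 + x * Real.exp (-x ^ 2 / 2) / (∫ t in (0 : ℝ)..x, Real.exp (-t ^ 2 / 2)) ≤
      x ^ 2 * (x ^ 2 + 2) / (x ^ 2 + 3) := by
  have hsplit : x ^ 2 * (x ^ 2 + 2) / (x ^ 2 + 3) = x ^ 2 - 1 + 3 / (x ^ 2 + 3) := by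
    field_simp
    ring
  rw [hsplit]
  exact add_le_add_right (mul_exp_neg_sq_half_div_integral_le hx) _
end

section
/- Let a > 0 and σ > 0, let Φ be the standard normal cumulative distribution function, set Z = Φ(a/σ) − Φ(−a/σ), and let f(x) = (1/(σ·Z·√(2π)))·exp(−x²/(2σ²)) for x ∈ [−a, a] (and 0 otherwise) be the density of the normal distribution N(0, σ²) truncated to [−a, a]. Let u(x) = 1/(2a) on [−a, a] be the density of Uniform[−a, a]. Then KL(f ‖ u) = ∫_{−a}^{a} f(x)·log(f(x)/u(x)) dx = −(1/2)·log(2πe) − log σ − log Z + (a/(√(2π)·σ·Z))·exp(−a²/(2σ²)) + log(2a). -/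
/-! On `[-a, a]` one has `log (f / u) = log (2a / (σ Z √(2π))) - x² / (2σ²)`, so the divergence
is that constant (`f` has mass one, since `∫ exp (-x²/(2σ²)) = σ √(2π) Z`) minus the truncated
second moment over `2σ²`. Integrating `(x exp (-x²/(2σ²)))'` by parts gives that moment as
`σ² - (2aσ / (√(2π) Z)) exp (-a²/(2σ²))`, which produces the boundary term. -/

open MeasureTheory

/-- The standard normal cumulative distribution function. -/
noncomputable def stdNormalCDF (x : ℝ) : ℝ :=
  (∫ t in Set.Iic x, Real.exp (-t ^ 2 / 2)) / Real.sqrt (2 * Real.pi)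

open Real

lemma integrable_exp_neg_sq_div_two : Integrable fun t : ℝ => exp (-t ^ 2 / 2) := by
  convert integrable_exp_neg_mul_sq (by norm_num : (0 : ℝ) < 1 / 2) using 2 with t
  ring_nf

lemma stdNormalCDF_sub_stdNormalCDF (x y : ℝ) :
    stdNormalCDF y - stdNormalCDF x = (∫ t in x..y, exp (-t ^ 2 / 2)) / √(2 * π) := by
  rw [stdNormalCDF, stdNormalCDF, div_sub_div_same,
    intervalIntegral.integral_Iic_sub_Iic integrable_exp_neg_sq_div_two.integrableOn
      integrable_exp_neg_sq_div_two.integrableOn]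

lemma stdNormalCDF_strictMono : StrictMono stdNormalCDF := by
  intro x y hxy
  rw [← sub_pos, stdNormalCDF_sub_stdNormalCDF]
  exact div_pos (intervalIntegral.intervalIntegral_pos_of_pos
    integrable_exp_neg_sq_div_two.intervalIntegrable (fun t => exp_pos _) hxy) (by positivity)

lemma integral_exp_neg_sq_div {σ : ℝ} (hσ : σ ≠ 0) (c d : ℝ) :
    ∫ x in c..d, exp (-x ^ 2 / (2 * σ ^ 2)) =
      σ * √(2 * π) * (stdNormalCDF (d / σ) - stdNormalCDF (c / σ)) := by
  have h_scale (x : ℝ) : exp (-x ^ 2 / (2 * σ ^ 2)) = exp (-(x / σ) ^ 2 / 2) := by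
    congr 1
    field_simp
  simp_rw [h_scale]
  rw [intervalIntegral.integral_comp_div (fun t => exp (-t ^ 2 / 2)) hσ,
    stdNormalCDF_sub_stdNormalCDF, smul_eq_mul]
  field_simp

lemma hasDerivAt_mul_exp_neg_sq_div (σ x : ℝ) :
    HasDerivAt (fun x => x * exp (-x ^ 2 / (2 * σ ^ 2)))
      (exp (-x ^ 2 / (2 * σ ^ 2)) - x ^ 2 * exp (-x ^ 2 / (2 * σ ^ 2)) / σ ^ 2) x := by
  have h_exponent : HasDerivAt (fun x => -x ^ 2 / (2 * σ ^ 2)) (-x / σ ^ 2) x := by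
    refine (((hasDerivAt_pow 2 x).neg).div_const (2 * σ ^ 2)).congr_deriv ?_
    ring
  refine ((hasDerivAt_id x).mul h_exponent.exp).congr_deriv ?_
  simp only [id]
  ring

lemma integral_sq_mul_exp_neg_sq_div {σ : ℝ} (hσ : σ ≠ 0) (c d : ℝ) :
    ∫ x in c..d, x ^ 2 * exp (-x ^ 2 / (2 * σ ^ 2)) =
      σ ^ 2 * ((∫ x in c..d, exp (-x ^ 2 / (2 * σ ^ 2)))
        - (d * exp (-d ^ 2 / (2 * σ ^ 2)) - c * exp (-c ^ 2 / (2 * σ ^ 2)))) := by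
  have h_ftc := intervalIntegral.integral_eq_sub_of_hasDerivAt
    (a := c) (b := d) (fun x _ => hasDerivAt_mul_exp_neg_sq_div σ x)
    (Continuous.intervalIntegrable (by fun_prop) _ _)
  rw [intervalIntegral.integral_sub (Continuous.intervalIntegrable (by fun_prop) _ _)
      (Continuous.intervalIntegrable (by fun_prop) _ _),
    intervalIntegral.integral_div] at h_ftc
  rw [← h_ftc]
  field_simp
  ring

lemma integral_mul_exp_neg_sq_div_mul_log {σ C L : ℝ} (hC : C ≠ 0) (hL : L ≠ 0) (c d : ℝ) :
    ∫ x in c..d, C * exp (-x ^ 2 / (2 * σ ^ 2)) * log (C * exp (-x ^ 2 / (2 * σ ^ 2)) / (1 / L)) =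
      log (C * L) * C * (∫ x in c..d, exp (-x ^ 2 / (2 * σ ^ 2)))
        - C / (2 * σ ^ 2) * ∫ x in c..d, x ^ 2 * exp (-x ^ 2 / (2 * σ ^ 2)) := by
  have h_log (x : ℝ) : log (C * exp (-x ^ 2 / (2 * σ ^ 2)) / (1 / L)) =
      log (C * L) - x ^ 2 / (2 * σ ^ 2) := by
    rw [div_div_eq_mul_div, div_one, mul_right_comm, log_mul (mul_ne_zero hC hL) (exp_pos _).ne',
      log_exp]
    ring
  simp_rw [h_log]
  rw [← intervalIntegral.integral_const_mul, ← intervalIntegral.integral_const_mul,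
    ← intervalIntegral.integral_sub (Continuous.intervalIntegrable (by fun_prop) _ _)
      (Continuous.intervalIntegrable (by fun_prop) _ _)]
  congr 1 with x
  ring

/-- Closed form of `KL(N(0, σ², −a, a) ‖ Uniform[−a,a])`, the KL divergence from the
normal density `N(0,σ²)` truncated to `[−a,a]` to the uniform density on `[−a,a]`:
it equals `−(1/2)·log(2πe) − log σ − log Z + (a/(√(2π)·σ·Z))·exp(−a²/(2σ²)) + log(2a)`,
where `Z = Φ(a/σ) − Φ(−a/σ)`. -/
theorem kl_truncated_normal_uniform (a σ : ℝ) (ha : 0 < a) (hσ : 0 < σ)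
    (Z : ℝ) (hZ : Z = stdNormalCDF (a / σ) - stdNormalCDF (-(a / σ)))
    (f : ℝ → ℝ)
    (hf : f = Set.indicator (Set.Icc (-a) a)
      (fun x => 1 / (σ * Z * Real.sqrt (2 * Real.pi)) * Real.exp (-x ^ 2 / (2 * σ ^ 2))))
    (u : ℝ → ℝ)
    (hu : u = Set.indicator (Set.Icc (-a) a) (fun _ => 1 / (2 * a))) :
    ∫ x in Set.Icc (-a) a, f x * Real.log (f x / u x) =
      -(1 / 2) * Real.log (2 * Real.pi * Real.exp 1) - Real.log σ - Real.log Z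
        + a / (Real.sqrt (2 * Real.pi) * σ * Z) * Real.exp (-a ^ 2 / (2 * σ ^ 2))
        + Real.log (2 * a) := by
  have hZ_pos : 0 < Z := hZ ▸ sub_pos.2 (stdNormalCDF_strictMono (by linarith [div_pos ha hσ]))
  have h_mass : ∫ x in (-a)..a, exp (-x ^ 2 / (2 * σ ^ 2)) = σ * √(2 * π) * Z := by
    rw [integral_exp_neg_sq_div hσ.ne', hZ, neg_div]
  have h_interval : ∫ x in Set.Icc (-a) a, f x * log (f x / u x) =
      ∫ x in (-a)..a, 1 / (σ * Z * √(2 * π)) * exp (-x ^ 2 / (2 * σ ^ 2))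
        * log (1 / (σ * Z * √(2 * π)) * exp (-x ^ 2 / (2 * σ ^ 2)) / (1 / (2 * a))) := by
    rw [integral_Icc_eq_integral_Ioc, ← intervalIntegral.integral_of_le (by linarith)]
    refine intervalIntegral.integral_congr fun x hx => ?_
    rw [Set.uIcc_of_le (by linarith)] at hx
    simp only [hf, hu, Set.indicator_of_mem hx]
  have h_log : log (1 / (σ * Z * √(2 * π)) * (2 * a)) =
      log (2 * a) - log σ - log Z - log (2 * π) / 2 := by
    rw [one_div_mul_eq_div, log_div (by positivity) (by positivity),
      log_mul (mul_pos hσ hZ_pos).ne' (by positivity), log_mul hσ.ne' hZ_pos.ne',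
      log_sqrt (by positivity)]
    ring
  rw [h_interval, integral_mul_exp_neg_sq_div_mul_log (by positivity) (by positivity),
    integral_sq_mul_exp_neg_sq_div hσ.ne', h_mass, h_log, log_mul (by positivity) (exp_pos 1).ne',
    log_exp, neg_sq]
  field_simp
  ring
end
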